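/- Let 𝔥 be a fat indecomposable (−3)-saturated Hoffman graph with a reduced representation ψ : V_s(𝔥) → ℤⁿ of norm 3. If i ∈ {1, …, n} and ψ(s)_i ≠ 0 for some slim vertex s, then there exist slim vertices s₁, s₂ of 𝔥 such that ψ(s₁)_i = 1 and ψ(s₂)_i = −1. -/

import Mathlib

attribute [local instance] Classical.propDecidable

open scoped RealInnerProductSpace

/-- A Hoffman graph: a graph together with a labeling of its vertices as fat or slim,
such that every fat vertex has a slim neighbor and fat vertices are pairwise nonadjacent. -/
structure HoffmanGraph (V : Type*) where
  graph : SimpleGraph V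
  IsFat : V → Prop
  fat_not_adj : ∀ {x y : V}, IsFat x → IsFat y → ¬ graph.Adj x y
  fat_slim_nbr : ∀ {x : V}, IsFat x → ∃ y : V, ¬ IsFat y ∧ graph.Adj x y

namespace HoffmanGraph

variable {V : Type*}

/-- A vertex is slim if it is not fat. -/
def IsSlim (H : HoffmanGraph V) (x : V) : Prop := ¬ H.IsFat x

/-- The type of slim vertices. -/
abbrev Slim (H : HoffmanGraph V) := {v : V // H.IsSlim v}

/-- The number of fat neighbors of a vertex. -/
noncomputable def fatDeg (H : HoffmanGraph V) (x : V) : ℕ :=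
  {f : V | H.IsFat f ∧ H.graph.Adj x f}.ncard

/-- The number of common fat neighbors of two vertices. -/
noncomputable def commonFat (H : HoffmanGraph V) (x y : V) : ℕ :=
  {f : V | H.IsFat f ∧ H.graph.Adj x f ∧ H.graph.Adj y f}.ncard

lemma commonFat_comm (H : HoffmanGraph V) (x y : V) :
    H.commonFat x y = H.commonFat y x := by
  unfold commonFat
  congr 1
  ext f
  simp only [Set.mem_setOf_eq]
  tauto

/-- A Hoffman graph is fat if every slim vertex has a fat neighbor. -/
def IsFatGraph (H : HoffmanGraph V) : Prop :=
  ∀ x, H.IsSlim x → ∃ f, H.IsFat f ∧ H.graph.Adj x f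

/-- A representation of norm `m`. -/
def IsRep (H : HoffmanGraph V) (m : ℝ) {E : Type*} [NormedAddCommGroup E]
    [InnerProductSpace ℝ E] (φ : V → E) : Prop :=
  (∀ x, H.IsSlim x → ⟪φ x, φ x⟫ = m) ∧
  (∀ x, H.IsFat x → ⟪φ x, φ x⟫ = 1) ∧
  (∀ x y, H.graph.Adj x y → ⟪φ x, φ y⟫ = 1) ∧
  (∀ x y, x ≠ y → ¬ H.graph.Adj x y → ⟪φ x, φ y⟫ = 0)

/-- A reduced representation of norm `m` (only the values on slim vertices matter). -/
def IsReducedRep (H : HoffmanGraph V) (m : ℝ) {E : Type*} [NormedAddCommGroup E]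
    [InnerProductSpace ℝ E] (ψ : V → E) : Prop :=
  (∀ x, H.IsSlim x → ⟪ψ x, ψ x⟫ = m - H.fatDeg x) ∧
  (∀ x y, H.IsSlim x → H.IsSlim y → H.graph.Adj x y → ⟪ψ x, ψ y⟫ = 1 - H.commonFat x y) ∧
  (∀ x y, H.IsSlim x → H.IsSlim y → x ≠ y → ¬ H.graph.Adj x y →
    ⟪ψ x, ψ y⟫ = - (H.commonFat x y : ℝ))

/-- The matrix B(𝔥) = A_s − C Cᵀ, indexed by the slim vertices. -/
noncomputable def matrixB (H : HoffmanGraph V) : Matrix H.Slim H.Slim ℝ :=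
  fun x y => (if H.graph.Adj x.1 y.1 then (1 : ℝ) else 0) - (H.commonFat x.1 y.1 : ℝ)

/-- The smallest eigenvalue of a Hoffman graph. -/
noncomputable def lambdaMin (H : HoffmanGraph V) [Fintype V] : ℝ :=
  sInf (spectrum ℝ H.matrixB)

/-- A subset of the vertices induces a Hoffman graph iff every fat vertex of it retains
a slim neighbor inside it. -/
def IsGoodSubset (H : HoffmanGraph V) (S : Set V) : Prop :=
  ∀ x ∈ S, H.IsFat x → ∃ y ∈ S, ¬ H.IsFat y ∧ H.graph.Adj x y

/-- The induced Hoffman subgraph on a good subset. -/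
def induce (H : HoffmanGraph V) (S : Set V) (hS : H.IsGoodSubset S) : HoffmanGraph S where
  graph := H.graph.induce S
  IsFat := fun x => H.IsFat x.1
  fat_not_adj := by
    intro x y hx hy hadj
    exact H.fat_not_adj hx hy hadj
  fat_slim_nbr := by
    rintro ⟨x, hxS⟩ hx
    obtain ⟨y, hyS, hy, hadj⟩ := hS x hxS hx
    exact ⟨⟨y, hyS⟩, hy, hadj⟩

/-- An (abstract) induced Hoffman subgraph relation between Hoffman graphs. -/
def IsInducedSubgraphOf {V₁ V₂ : Type*} (H₁ : HoffmanGraph V₁) (H₂ : HoffmanGraph V₂) : Prop :=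
  ∃ e : V₁ ↪ V₂, (∀ x y, H₂.graph.Adj (e x) (e y) ↔ H₁.graph.Adj x y) ∧
    (∀ x, H₂.IsFat (e x) ↔ H₁.IsFat x)

/-- Isomorphism of Hoffman graphs. -/
def IsIsoTo {V₁ V₂ : Type*} (H₁ : HoffmanGraph V₁) (H₂ : HoffmanGraph V₂) : Prop :=
  ∃ e : V₁ ≃ V₂, (∀ x y, H₂.graph.Adj (e x) (e y) ↔ H₁.graph.Adj x y) ∧
    (∀ x, H₂.IsFat (e x) ↔ H₁.IsFat x)

/-- `H` is the sum of its induced subgraphs on `W₁` and `W₂`. -/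
structure IsSum (H : HoffmanGraph V) (W₁ W₂ : Set V) : Prop where
  nonempty₁ : W₁.Nonempty
  nonempty₂ : W₂.Nonempty
  good₁ : H.IsGoodSubset W₁
  good₂ : H.IsGoodSubset W₂
  union_eq : W₁ ∪ W₂ = Set.univ
  slim_partition : ∀ v, H.IsSlim v → (v ∈ W₁ ↔ v ∉ W₂)
  fat_closed₁ : ∀ x ∈ W₁, H.IsSlim x → ∀ f, H.IsFat f → H.graph.Adj x f → f ∈ W₁
  fat_closed₂ : ∀ x ∈ W₂, H.IsSlim x → ∀ f, H.IsFat f → H.graph.Adj x f → f ∈ W₂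
  common_le : ∀ x ∈ W₁, ∀ y ∈ W₂, H.IsSlim x → H.IsSlim y → H.commonFat x y ≤ 1
  common_iff : ∀ x ∈ W₁, ∀ y ∈ W₂, H.IsSlim x → H.IsSlim y →
    (H.commonFat x y = 1 ↔ H.graph.Adj x y)

/-- `H` is decomposable if it is the sum of two nonempty induced Hoffman subgraphs. -/
def Decomposable (H : HoffmanGraph V) : Prop := ∃ W₁ W₂ : Set V, H.IsSum W₁ W₂

def Indecomposable (H : HoffmanGraph V) : Prop := ¬ H.Decomposable

/-- `H` is the sum of the family of its induced subgraphs on `W i`. -/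
structure IsSumFamily (H : HoffmanGraph V) {n : ℕ} (W : Fin n → Set V) : Prop where
  nonempty : ∀ i, (W i).Nonempty
  good : ∀ i, H.IsGoodSubset (W i)
  union_eq : ⋃ i, W i = Set.univ
  slim_mem_unique : ∀ v, H.IsSlim v → ∃! i, v ∈ W i
  fat_closed : ∀ i, ∀ x ∈ W i, H.IsSlim x → ∀ f, H.IsFat f → H.graph.Adj x f → f ∈ W i
  common_le : ∀ i j, i ≠ j → ∀ x ∈ W i, ∀ y ∈ W j, H.IsSlim x → H.IsSlim y →
    H.commonFat x y ≤ 1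
  common_iff : ∀ i j, i ≠ j → ∀ x ∈ W i, ∀ y ∈ W j, H.IsSlim x → H.IsSlim y →
    (H.commonFat x y = 1 ↔ H.graph.Adj x y)

/-- Attach a new fat vertex (the `none` vertex) adjacent exactly to the slim vertices in `S`. -/
def attachFat (H : HoffmanGraph V) (S : Set V) (hne : S.Nonempty)
    (hslim : ∀ v ∈ S, H.IsSlim v) : HoffmanGraph (Option V) where
  graph := {
    Adj := fun a b =>
      match a, b with
      | none, none => False
      | none, some v => v ∈ S
      | some v, none => v ∈ S
      | some u, some v => H.graph.Adj u v
    symm := by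
      constructor
      rintro (_|u) (_|v) h
      · exact h.elim
      · exact h
      · exact h
      · exact h.symm
    loopless := by
      constructor
      rintro (_|u) h
      · exact h.elim
      · exact H.graph.loopless.irrefl u h }
  IsFat := fun a => match a with | none => True | some v => H.IsFat v
  fat_not_adj := by
    rintro (_|u) (_|v) hu hv h
    · exact h.elim
    · exact (hslim v h) hv
    · exact (hslim u h) hu
    · exact H.fat_not_adj hu hv h
  fat_slim_nbr := by
    rintro (_|u) hu
    · obtain ⟨s, hs⟩ := hne
      exact ⟨some s, hslim s hs, hs⟩
    · obtain ⟨y, hy, hadj⟩ := H.fat_slim_nbr hu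
      exact ⟨some y, hy, hadj⟩

/-- `H` is `μ`-saturated: it has smallest eigenvalue at least `μ` and no fat vertex can be
attached while keeping the smallest eigenvalue at least `μ`. -/
def IsSaturated (H : HoffmanGraph V) [Fintype V] (μ : ℝ) : Prop :=
  μ ≤ H.lambdaMin ∧
  ∀ (S : Set V) (hne : S.Nonempty) (hslim : ∀ v ∈ S, H.IsSlim v),
    ¬ (μ ≤ (H.attachFat S hne hslim).lambdaMin)

/-- The special graph `S⁻(𝔥)`: slim vertices, adjacent when the inner product of their
reduced representations is negative. -/
noncomputable def specialMinus (H : HoffmanGraph V) : SimpleGraph H.Slim where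
  Adj x y := x ≠ y ∧
    ((H.graph.Adj x.1 y.1 ∧ (1 : ℝ) - (H.commonFat x.1 y.1 : ℝ) < 0) ∨
     (¬ H.graph.Adj x.1 y.1 ∧ -(H.commonFat x.1 y.1 : ℝ) < 0))
  symm := by
    constructor
    rintro x y ⟨hne, h⟩
    refine ⟨hne.symm, ?_⟩
    rw [H.commonFat_comm y.1 x.1]
    rcases h with ⟨ha, hl⟩ | ⟨ha, hl⟩
    · exact Or.inl ⟨ha.symm, hl⟩
    · exact Or.inr ⟨fun hadj => ha hadj.symm, hl⟩
  loopless := ⟨fun x h => h.1 rfl⟩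

/-- The special graph `S⁺(𝔥)`: slim vertices, adjacent when the inner product of their
reduced representations is positive. -/
noncomputable def specialPlus (H : HoffmanGraph V) : SimpleGraph H.Slim where
  Adj x y := x ≠ y ∧
    ((H.graph.Adj x.1 y.1 ∧ 0 < (1 : ℝ) - (H.commonFat x.1 y.1 : ℝ)) ∨
     (¬ H.graph.Adj x.1 y.1 ∧ 0 < -(H.commonFat x.1 y.1 : ℝ)))
  symm := by
    constructor
    rintro x y ⟨hne, h⟩
    refine ⟨hne.symm, ?_⟩
    rw [H.commonFat_comm y.1 x.1]
    rcases h with ⟨ha, hl⟩ | ⟨ha, hl⟩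
    · exact Or.inl ⟨ha.symm, hl⟩
    · exact Or.inr ⟨fun hadj => ha hadj.symm, hl⟩
  loopless := ⟨fun x h => h.1 rfl⟩

/-- The special graph `S(𝔥)`, the union of `S⁻(𝔥)` and `S⁺(𝔥)`. -/
noncomputable def special (H : HoffmanGraph V) : SimpleGraph H.Slim :=
  H.specialMinus ⊔ H.specialPlus

/-- `⟨S⟩_𝔥`: the set `S` together with all fat neighbors of its members. -/
def closureSet (H : HoffmanGraph V) (S : Set V) : Set V :=
  S ∪ {f | H.IsFat f ∧ ∃ x ∈ S, H.graph.Adj x f}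

/-- The Hoffman graph `𝔥^(t)` with one slim vertex (`none`) and `t` fat vertices. -/
def manyFat (t : ℕ) : HoffmanGraph (Option (Fin t)) where
  graph := {
    Adj := fun a b => (a = none ∧ b ≠ none) ∨ (a ≠ none ∧ b = none)
    symm := by
      constructor
      rintro a b (⟨h1, h2⟩ | ⟨h1, h2⟩)
      · exact Or.inr ⟨h2, h1⟩
      · exact Or.inl ⟨h2, h1⟩
    loopless := by
      constructor
      rintro a (⟨h1, h2⟩ | ⟨h1, h2⟩)
      · exact h2 h1
      · exact h1 h2 }
  IsFat := fun a => a ≠ none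
  fat_not_adj := by
    rintro a b ha hb (⟨h1, _⟩ | ⟨_, h1⟩)
    · exact ha h1
    · exact hb h1
  fat_slim_nbr := by
    intro a ha
    refine ⟨none, by simp, Or.inr ⟨ha, rfl⟩⟩

/-- An ordinary (slim) graph regarded as a Hoffman graph. -/
def ofSimple {W : Type*} (G : SimpleGraph W) : HoffmanGraph W where
  graph := G
  IsFat := fun _ => False
  fat_not_adj := by intro x y hx _ _; exact hx
  fat_slim_nbr := by intro x hx; exact hx.elim

end HoffmanGraph
namespace HoffmanGraph

variable {V : Type*}

/-- The Hoffman graph obtained by replacing the fat vertices `f i` by slim cliques of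
sizes `n i`, joining all neighbors of `f i` to all vertices of the `i`-th clique. -/
def blowup {k : ℕ} (H : HoffmanGraph V) (f : Fin k → V) (hf : ∀ i, H.IsFat (f i))
    (n : Fin k → ℕ) :
    HoffmanGraph ({v : V // v ∉ Set.range f} ⊕ (Σ i : Fin k, Fin (n i))) where
  graph := {
    Adj := fun a b =>
      match a, b with
      | .inl u, .inl v => H.graph.Adj u.1 v.1
      | .inl u, .inr x => H.graph.Adj u.1 (f x.1)
      | .inr x, .inl v => H.graph.Adj (f x.1) v.1
      | .inr x, .inr y => x ≠ y ∧ x.1 = y.1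
    symm := by
      constructor
      rintro (u|x) (v|y) h
      · exact h.symm
      · exact h.symm
      · exact h.symm
      · exact ⟨h.1.symm, h.2.symm⟩
    loopless := by
      constructor
      rintro (u|x) h
      · exact H.graph.loopless.irrefl _ h
      · exact h.1 rfl }
  IsFat := fun a => match a with | .inl u => H.IsFat u.1 | .inr _ => False
  fat_not_adj := by
    rintro (u|x) (v|y) hu hv h
    · exact H.fat_not_adj hu hv h
    · exact hv
    · exact hu
    · exact hu
  fat_slim_nbr := by
    rintro (u|x) hu
    · obtain ⟨y, hy, hadj⟩ := H.fat_slim_nbr hu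
      refine ⟨Sum.inl ⟨y, ?_⟩, hy, hadj⟩
      rintro ⟨i, rfl⟩
      exact hy (hf i)
    · exact hu.elim

/-- The slim graph obtained by replacing every fat vertex by a slim `n`-clique,
joining all neighbors of a fat vertex to all vertices of its clique. -/
def blowupAll (H : HoffmanGraph V) (n : ℕ) :
    HoffmanGraph (H.Slim ⊕ ({f : V // H.IsFat f} × Fin n)) where
  graph := {
    Adj := fun a b =>
      match a, b with
      | .inl u, .inl v => H.graph.Adj u.1 v.1
      | .inl u, .inr x => H.graph.Adj u.1 x.1.1
      | .inr x, .inl v => H.graph.Adj x.1.1 v.1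
      | .inr x, .inr y => x ≠ y ∧ x.1 = y.1
    symm := by
      constructor
      rintro (u|x) (v|y) h
      · exact h.symm
      · exact h.symm
      · exact h.symm
      · exact ⟨h.1.symm, h.2.symm⟩
    loopless := by
      constructor
      rintro (u|x) h
      · exact H.graph.loopless.irrefl _ h
      · exact h.1 rfl }
  IsFat := fun _ => False
  fat_not_adj := by intro x y hx _; exact hx.elim
  fat_slim_nbr := by intro x hx; exact hx.elim

/-- The Hoffman graph of Example 4.2: slim vertices `ℤ/4ℤ` (the `inl`'s), fat vertices
`f_j` for `j ∈ ℤ/4ℤ` (the `inr`'s), with edges `{0,2}`, `{1,3}` and `{i, f_j}` for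
`i = j` or `i = j + 1`. -/
def exampleA3tilde : HoffmanGraph (ZMod 4 ⊕ ZMod 4) where
  graph := {
    Adj := fun a b =>
      match a, b with
      | .inl i, .inl j => j = i + 2
      | .inl i, .inr j => i = j ∨ i = j + 1
      | .inr j, .inl i => i = j ∨ i = j + 1
      | .inr _, .inr _ => False
    symm := by
      have h4 : (2 : ZMod 4) + 2 = 0 := by decide
      constructor
      rintro (i|i) (j|j) h
      · have h' : j = i + 2 := h
        subst h'
        show i = i + 2 + 2
        rw [add_assoc, h4, add_zero]
      · exact h
      · exact h
      · exact h.elim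
    loopless := by
      constructor
      rintro (i|i) h
      · exact (by decide : ∀ x : ZMod 4, x ≠ x + 2) i h
      · exact h }
  IsFat := fun a => match a with | .inl _ => False | .inr _ => True
  fat_not_adj := by
    rintro (i|i) (j|j) hx hy h
    · exact hx
    · exact hx
    · exact hy
    · exact h
  fat_slim_nbr := by
    rintro (i|i) hx
    · exact hx.elim
    · exact ⟨Sum.inl i, id, Or.inl rfl⟩

end HoffmanGraph

/-- The extended Dynkin graph `D̃₄`, i.e. the star `K_{1,4}`. -/
def tildeD4Graph : SimpleGraph (Fin 5) := SimpleGraph.fromRel (fun a _ => a = 0)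

/-- The Dynkin graph `A_m`: the path on `m` vertices. -/
def dynkinA (m : ℕ) : SimpleGraph (Fin m) :=
  SimpleGraph.fromRel (fun i j => i.1 + 1 = j.1)

/-- The extended Dynkin graph `Ã_m`: the cycle on `m + 1` vertices. -/
def tildeA (m : ℕ) : SimpleGraph (ZMod (m + 1)) :=
  SimpleGraph.fromRel (fun i j => i + 1 = j)

/-- The Dynkin graph `D_m`: the path `1 - 2 - ⋯ - (m-1)` with the extra vertex `0`
attached to the vertex `2`. -/
def dynkinD (m : ℕ) : SimpleGraph (Fin m) :=
  SimpleGraph.fromRel (fun i j => (1 ≤ i.1 ∧ i.1 + 1 = j.1) ∨ (i.1 = 0 ∧ j.1 = 2))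

/-- The extended Dynkin graph `D̃_m` on `m + 1` vertices: the path `1 - 2 - ⋯ - (m-1)`
with the extra vertex `0` attached to `2` and the extra vertex `m` attached to `m - 2`. -/
def tildeD (m : ℕ) : SimpleGraph (Fin (m + 1)) :=
  SimpleGraph.fromRel (fun i j =>
    (1 ≤ i.1 ∧ i.1 + 1 = j.1 ∧ j.1 ≤ m - 1) ∨ (i.1 = 0 ∧ j.1 = 2) ∨ (i.1 = m ∧ j.1 = m - 2))

/-! If all nonzero entries of coordinate `i` had the same sign `c = ±1`, then erasing that
coordinate would turn `ψ` into a reduced representation of norm 3 of the Hoffman graph obtained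
by attaching one new fat vertex to the slim vertices with entry `c`: this adds exactly
`ψ(u)ᵢ ψ(w)ᵢ` to the number of common fat neighbours of `u` and `w`. A reduced representation
of norm `m` exhibits `B + m I` as a Gram matrix, so the enlarged graph would still have smallest
eigenvalue at least `-3`, against saturation. Integrality and fatness force every entry into
`{0, 1, -1}`, since its square is at most `3 - |N^f(v)| ≤ 2`. -/

namespace HoffmanGraph

section gram

variable {V : Type*} {H : HoffmanGraph V} {E : Type*} [NormedAddCommGroup E]
  [InnerProductSpace ℝ E] {m : ℝ} {ψ : V → E}

lemma commonFat_self (H : HoffmanGraph V) (x : V) : H.commonFat x x = H.fatDeg x := by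
  simp only [commonFat, fatDeg, and_self]

lemma IsReducedRep.inner_eq (hψ : H.IsReducedRep m ψ) (x y : H.Slim) :
    ⟪ψ x, ψ y⟫ = H.matrixB x y + if x = y then m else 0 := by
  by_cases hxy : x = y
  · subst hxy
    rw [hψ.1 x x.2]
    simp [matrixB, commonFat_self]
    ring
  · have hne : x.1 ≠ y.1 := Subtype.coe_ne_coe.mpr hxy
    by_cases hadj : H.graph.Adj x.1 y.1
    · simp [hψ.2.1 x y x.2 y.2 hadj, matrixB, hadj, hxy]
    · simp [hψ.2.2 x y x.2 y.2 hne hadj, matrixB, hadj, hxy]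

lemma IsReducedRep.gram_eq [Fintype H.Slim] (hψ : H.IsReducedRep m ψ) :
    Matrix.gram ℝ (fun x : H.Slim => ψ x) = algebraMap ℝ _ m + H.matrixB := by
  ext x y
  simp [hψ.inner_eq, Matrix.algebraMap_matrix_apply, add_comm]

/-- Without slim vertices the spectrum is empty and `lambdaMin` is the junk value `sInf ∅ = 0`. -/
lemma IsReducedRep.neg_le_lambdaMin [Fintype V] (hm : 0 ≤ m) (hψ : H.IsReducedRep m ψ) :
    -m ≤ H.lambdaMin := by
  rcases (spectrum ℝ H.matrixB).eq_empty_or_nonempty with hempty | hne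
  · rw [lambdaMin, hempty, Real.sInf_empty]
    linarith
  refine le_csInf hne fun μ hμ => ?_
  have hshift : m + μ ∈ spectrum ℝ (Matrix.gram ℝ (fun x : H.Slim => ψ x)) := by
    rw [hψ.gram_eq, ← spectrum.singleton_add_eq]
    exact Set.add_mem_add rfl hμ
  have hnonneg : 0 ≤ m + μ :=
    (Matrix.posSemidef_iff_isHermitian_and_spectrum_nonneg.mp (Matrix.posSemidef_gram ℝ _)).2
      hshift
  linarith

end gram

section attachFat

variable {V : Type*} [Finite V] {H : HoffmanGraph V} (S : Set V) (hne : S.Nonempty)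
  (hslim : ∀ v ∈ S, H.IsSlim v)

lemma attachFat_commonFat (u w : V) :
    (H.attachFat S hne hslim).commonFat (some u) (some w)
      = H.commonFat u w + if u ∈ S ∧ w ∈ S then 1 else 0 := by
  have hset : {f | (H.attachFat S hne hslim).IsFat f ∧
        (H.attachFat S hne hslim).graph.Adj (some u) f ∧
        (H.attachFat S hne hslim).graph.Adj (some w) f}
      = some '' {f | H.IsFat f ∧ H.graph.Adj u f ∧ H.graph.Adj w f}
        ∪ if u ∈ S ∧ w ∈ S then {none} else ∅ := by
    ext (_ | f) <;> split_ifs <;> simp_all [attachFat]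
  rw [commonFat, hset, commonFat]
  split_ifs
  · rw [Set.union_singleton, Set.ncard_insert_of_notMem (by simp),
      Set.ncard_image_of_injective _ (Option.some_injective V)]
  · rw [Set.union_empty, Set.ncard_image_of_injective _ (Option.some_injective V), add_zero]

variable {E : Type*} [NormedAddCommGroup E] [InnerProductSpace ℝ E]

lemma IsReducedRep.attachFat {m : ℝ} {ψ φ : V → E} (hψ : H.IsReducedRep m ψ)
    (hφ : ∀ u w, H.IsSlim u → H.IsSlim w →
      ⟪φ u, φ w⟫ = ⟪ψ u, ψ w⟫ - if u ∈ S ∧ w ∈ S then 1 else 0) :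
    (H.attachFat S hne hslim).IsReducedRep m (fun a => a.elim 0 φ) := by
  refine ⟨?_, ?_, ?_⟩
  · rintro (_ | v) hv
    · exact absurd trivial hv
    · dsimp only [Option.elim_some]
      rw [← commonFat_self, attachFat_commonFat, hφ v v hv hv, hψ.1 v hv, commonFat_self]
      split_ifs <;> push_cast <;> ring
  · rintro (_ | u) (_ | w) hu hw hadj
    · exact absurd trivial hu
    · exact absurd trivial hu
    · exact absurd trivial hw
    · dsimp only [Option.elim_some]
      rw [hφ u w hu hw, hψ.2.1 u w hu hw hadj, attachFat_commonFat]
      split_ifs <;> push_cast <;> ring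
  · rintro (_ | u) (_ | w) hu hw huw hadj
    · exact absurd trivial hu
    · exact absurd trivial hu
    · exact absurd trivial hw
    · dsimp only [Option.elim_some]
      rw [hφ u w hu hw, hψ.2.2 u w hu hw (Option.some_injective _ |>.ne_iff.mp huw) hadj,
        attachFat_commonFat]
      split_ifs <;> push_cast <;> ring

end attachFat

section coordinates

variable {V : Type*} {H : HoffmanGraph V} {ι : Type*} [Fintype ι] {m : ℝ}
  {ψ : V → EuclideanSpace ℝ ι}

lemma IsReducedRep.sq_apply_le [Finite V] (hψ : H.IsReducedRep m ψ) (hfat : H.IsFatGraph)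
    {v : V} (hv : H.IsSlim v) (i : ι) : ψ v i ^ 2 ≤ m - 1 := by
  obtain ⟨f, hf, hvf⟩ := hfat v hv
  have hdeg : 1 ≤ H.fatDeg v := (Set.ncard_pos).2 ⟨f, hf, hvf⟩
  calc ψ v i ^ 2 = ‖ψ v i‖ ^ 2 := by rw [Real.norm_eq_abs, sq_abs]
    _ ≤ ‖ψ v‖ ^ 2 := by gcongr; exact PiLp.norm_apply_le _ i
    _ = m - H.fatDeg v := by rw [← real_inner_self_eq_norm_sq, hψ.1 v hv]
    _ ≤ m - 1 := by gcongr; exact_mod_cast hdeg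

lemma IsReducedRep.apply_eq_one_or_neg_one [Finite V] (hψ : H.IsReducedRep 3 ψ)
    (hfat : H.IsFatGraph) {v : V} (hv : H.IsSlim v) {i : ι} (hint : ∃ k : ℤ, ψ v i = k)
    (hne : ψ v i ≠ 0) : ψ v i = 1 ∨ ψ v i = -1 := by
  obtain ⟨k, hk⟩ := hint
  have hsq : k ^ 2 ≤ 2 := by
    have := hψ.sq_apply_le hfat hv i
    rw [hk] at this
    exact_mod_cast (by linarith : (k : ℝ) ^ 2 ≤ 2)
  have hk0 : k ≠ 0 := by rintro rfl; simp_all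
  have hunit : k = 1 ∨ k = -1 := by
    have hlo : -1 ≤ k := by nlinarith
    have hhi : k ≤ 1 := by nlinarith
    omega
  rcases hunit with rfl | rfl <;> simp [hk]

variable [DecidableEq ι]

lemma _root_.EuclideanSpace.inner_sub_single_apply_sub_single_apply (x y : EuclideanSpace ℝ ι)
    (i : ι) : ⟪x - EuclideanSpace.single i (x i), y - EuclideanSpace.single i (y i)⟫
      = ⟪x, y⟫ - x i * y i := by
  simp only [inner_sub_left, inner_sub_right, EuclideanSpace.inner_single_left,
    EuclideanSpace.inner_single_right, PiLp.single_apply, if_true, conj_trivial]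
  ring

lemma IsSaturated.exists_apply_ne [Fintype V] (hsat : H.IsSaturated (-m)) (hm : 0 ≤ m)
    (hψ : H.IsReducedRep m ψ) (i : ι) {c : ℝ} (hc : c * c = 1) {s : V} (hs : H.IsSlim s)
    (hsc : ψ s i = c) : ∃ t, H.IsSlim t ∧ ψ t i ≠ 0 ∧ ψ t i ≠ c := by
  by_contra! hvals
  set S := {v | H.IsSlim v ∧ ψ v i = c}
  have hcoord : ∀ v, H.IsSlim v → ψ v i = if v ∈ S then c else 0 := by
    intro v hv
    by_cases h : ψ v i = c
    · simp [S, hv, h]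
    · simpa [S, h] using not_imp_comm.mp (hvals v hv) h
  refine hsat.2 S ⟨s, hs, hsc⟩ (fun v hv => hv.1) (IsReducedRep.neg_le_lambdaMin hm
    (hψ.attachFat S _ _ (φ := fun v => ψ v - EuclideanSpace.single i (ψ v i))
      fun u w hu hw => ?_))
  rw [EuclideanSpace.inner_sub_single_apply_sub_single_apply, hcoord u hu, hcoord w hw]
  split_ifs <;> simp_all

end coordinates

end HoffmanGraph

theorem exists_slim_with_plus_minus_one_coordinate_general {V : Type} [Fintype V]
    (H : HoffmanGraph V) (hfat : H.IsFatGraph)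
    (hsat : H.IsSaturated (-3))
    (n : ℕ) (ψ : V → EuclideanSpace ℝ (Fin n)) (hψ : H.IsReducedRep 3 ψ)
    (hint : ∀ v, H.IsSlim v → ∀ i, ∃ k : ℤ, ψ v i = (k : ℝ))
    (i : Fin n) (s : V) (hs : H.IsSlim s) (hsne : ψ s i ≠ 0) :
    ∃ s₁ s₂ : V, H.IsSlim s₁ ∧ H.IsSlim s₂ ∧ ψ s₁ i = 1 ∧ ψ s₂ i = -1 := by
  have hs_unit := hψ.apply_eq_one_or_neg_one hfat hs (hint s hs i) hsne
  obtain ⟨t, ht, ht0, hts⟩ := hsat.exists_apply_ne (by norm_num) hψ i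
    (by rcases hs_unit with h | h <;> simp [h]) hs rfl
  rcases hs_unit with hs1 | hs1 <;>
    rcases hψ.apply_eq_one_or_neg_one hfat ht (hint t ht i) ht0 with ht1 | ht1
  · exact absurd (ht1.trans hs1.symm) hts
  · exact ⟨s, t, hs, ht, hs1, ht1⟩
  · exact ⟨t, s, ht, hs, ht1, hs1⟩
  · exact absurd (ht1.trans hs1.symm) hts

/-- Lemma 4.3: if `𝔥` is a fat indecomposable `(-3)`-saturated Hoffman graph with an
integral reduced representation `ψ` of norm `3` and `ψ(s)ᵢ ≠ 0` for some slim `s`, then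
there are slim vertices `s₁, s₂` with `ψ(s₁)ᵢ = 1` and `ψ(s₂)ᵢ = -1`. -/
theorem exists_slim_with_plus_minus_one_coordinate {V : Type} [Fintype V]
    (H : HoffmanGraph V) (hfat : H.IsFatGraph) (hind : H.Indecomposable)
    (hsat : H.IsSaturated (-3))
    (n : ℕ) (ψ : V → EuclideanSpace ℝ (Fin n)) (hψ : H.IsReducedRep 3 ψ)
    (hint : ∀ v, H.IsSlim v → ∀ i, ∃ k : ℤ, ψ v i = (k : ℝ))
    (i : Fin n) (s : V) (hs : H.IsSlim s) (hsne : ψ s i ≠ 0) :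
    ∃ s₁ s₂ : V, H.IsSlim s₁ ∧ H.IsSlim s₂ ∧ ψ s₁ i = 1 ∧ ψ s₂ i = -1 :=
  exists_slim_with_plus_minus_one_coordinate_general H hfat hsat n ψ hψ hint i s hs hsne
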